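/- For every abelian group G there exists a (2,3) fractional code for S_3' over G; that is, the rate 2/3 is achievable on the sum-network S_3' over every abelian group (since S_3' contains S_3 together with extra edges, one can carry X_2 to terminal t_1 through the node u_3 because the block length 3 exceeds the message length 2, and reuse a (2,3) code for S_3). -/

import Mathlib

/-!
Every `(k,l)` code for the sum-network `S₃` is one for `S₃'`: the node `u₃` forwards what `s₂`
sent to `t₁` in `S₃`, and the new edge `(s₁,t₁)` may go unused. For `S₃` at rate `2/3`, the
bottleneck messages are `X₁ + X₃` and `X₂ + X₃`, with the spare third symbol carrying the first,
respectively second, coordinate of `X₃`. Terminals `t₁` and `t₂` add their missing source to the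
bottleneck message, and `t₃` adds both messages and subtracts the copy of `X₃` assembled from
the spare symbols.
-/

/-- A `(k,l)` fractional code for the sum-network `S₃'` over an abelian group `G`. -/
def S3'Code (G : Type*) [AddCommGroup G] (k l : ℕ) : Prop :=
  ∃ (a a' : (Fin k → G) → (Fin l → G))
    (m f g : (Fin k → G) → (Fin k → G) → (Fin l → G))
    (d₁ : (Fin l → G) → (Fin l → G) → (Fin l → G) → (Fin k → G))
    (d₂ d₃ : (Fin l → G) → (Fin l → G) → (Fin k → G)),
    (∀ x₁ x₂ x₃ : Fin k → G, d₁ (a' x₁) (m x₁ x₂) (f x₁ x₃) = x₁ + x₂ + x₃) ∧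
    (∀ x₁ x₂ x₃ : Fin k → G, d₂ (a x₁) (g x₂ x₃) = x₁ + x₂ + x₃) ∧
    (∀ x₁ x₂ x₃ : Fin k → G, d₃ (f x₁ x₃) (g x₂ x₃) = x₁ + x₂ + x₃)

/-- A `(k,l)` fractional code for the sum-network `S₃`, where `t₁` receives `b(X₂)` on `(s₂,t₁)`
and `f(X₁,X₃)`, `t₂` receives `a(X₁)` on `(s₁,t₂)` and `g(X₂,X₃)`, and `t₃` receives `f` and `g`. -/
def S3Code (G : Type*) [AddCommGroup G] (k l : ℕ) : Prop :=
  ∃ (a b : (Fin k → G) → (Fin l → G))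
    (f g : (Fin k → G) → (Fin k → G) → (Fin l → G))
    (d₁ d₂ d₃ : (Fin l → G) → (Fin l → G) → (Fin k → G)),
    (∀ x₁ x₂ x₃ : Fin k → G, d₁ (b x₂) (f x₁ x₃) = x₁ + x₂ + x₃) ∧
    (∀ x₁ x₂ x₃ : Fin k → G, d₂ (a x₁) (g x₂ x₃) = x₁ + x₂ + x₃) ∧
    (∀ x₁ x₂ x₃ : Fin k → G, d₃ (f x₁ x₃) (g x₂ x₃) = x₁ + x₂ + x₃)

theorem S3Code.s3'Code {G : Type*} [AddCommGroup G] {k l : ℕ} (h : S3Code G k l) :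
    S3'Code G k l := by
  obtain ⟨a, b, f, g, d₁, d₂, d₃, h₁, h₂, h₃⟩ := h
  exact ⟨a, a, fun _ x₂ => b x₂, f, g, fun _ B F => d₁ B F, d₂, d₃, h₁, h₂, h₃⟩

theorem s3Code_two_three (G : Type*) [AddCommGroup G] : S3Code G 2 3 := by
  refine ⟨fun x₁ => Fin.snoc x₁ 0, fun x₂ => Fin.snoc x₂ 0,
    fun x₁ x₃ => Fin.snoc (x₁ + x₃) (x₃ 0), fun x₂ x₃ => Fin.snoc (x₂ + x₃) (x₃ 1),
    fun u v => Fin.init u + Fin.init v, fun u v => Fin.init u + Fin.init v,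
    fun u v => Fin.init u + Fin.init v - ![u (Fin.last 2), v (Fin.last 2)], ?_, ?_, ?_⟩
  iterate 2
    · intro x₁ x₂ x₃
      simp only [Fin.init_snoc]
      abel
  · intro x₁ x₂ x₃
    have hx₃ : ![x₃ 0, x₃ 1] = x₃ := by
      ext i
      fin_cases i <;> rfl
    simp only [Fin.init_snoc, Fin.snoc_last, hx₃]
    abel

theorem S3'_two_three_code (G : Type*) [AddCommGroup G] : S3'Code G 2 3 :=
  (s3Code_two_three G).s3'Code
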